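/- If κ(u,v) ≥ k for every edge (u,v) of a finite connected graph G and a real number k, then κ(x,y) ≥ k for every pair of distinct vertices x, y of G. -/

import Mathlib

open scoped Classical
noncomputable section

namespace OR

variable {V : Type*}

/-- The degree of a vertex. -/
def deg (G : SimpleGraph V) (x : V) : ℕ := Nat.card (G.neighborSet x)

/-- The simple random walk measure at a vertex. -/
def rw (G : SimpleGraph V) (x : V) : V → ℝ :=
  fun v => if G.Adj x v then ((deg G x : ℝ))⁻¹ else 0

/-- A coupling between two measures on the vertex set. -/
def IsCoupling (μ ν : V → ℝ) (A : V → V → ℝ) : Prop :=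
  (∀ u v, 0 ≤ A u v) ∧
  (Function.support fun p : V × V => A p.1 p.2).Finite ∧
  (∀ u, ∑ᶠ v, A u v = μ u) ∧ (∀ v, ∑ᶠ u, A u v = ν v)

/-- The 1-Wasserstein distance w.r.t. the graph distance. -/
def W (G : SimpleGraph V) (μ ν : V → ℝ) : ℝ :=
  sInf { r | ∃ A, IsCoupling μ ν A ∧ r = ∑ᶠ u, ∑ᶠ v, A u v * (G.dist u v : ℝ) }

/-- The Ollivier–Ricci curvature. -/
def ricci (G : SimpleGraph V) (x y : V) : ℝ :=
  1 - W G (rw G x) (rw G y) / (G.dist x y : ℝ)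

/-- The number of common neighbours of `x` and `y`. -/
def tri (G : SimpleGraph V) (x y : V) : ℕ := Nat.card {w | G.Adj x w ∧ G.Adj y w}


end OR


/-!
Gluing a near-optimal coupling of `m_x, m_z` to one of `m_z, m_y` along the common marginal
`m_z` shows that `W` satisfies the triangle inequality. Along a geodesic `x = x₀ ~ x₁ ~ ⋯ ~ xₙ = y`
each step costs `W(m_{xᵢ}, m_{xᵢ₊₁}) ≤ 1 - k`, so `W(m_x, m_y) ≤ (1 - k) d(x, y)`.
-/

namespace OR

open Finset

variable {V : Type*}

theorem rw_nonneg {G : SimpleGraph V} (x v : V) : 0 ≤ rw G x v := by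
  unfold rw
  split_ifs <;> positivity

theorem le_ricci_iff {G : SimpleGraph V} {x y : V} (hxy : 0 < G.dist x y) (k : ℝ) :
    k ≤ ricci G x y ↔ W G (rw G x) (rw G y) ≤ (1 - k) * G.dist x y := by
  have hd : (0 : ℝ) < G.dist x y := by exact_mod_cast hxy
  rw [ricci, le_sub_comm, div_le_iff₀ hd]

variable [Fintype V]

section Coupling

variable {μ ν ρ : V → ℝ} {A B C : V → V → ℝ}

theorem isCoupling_iff_of_fintype :
    IsCoupling μ ν A ↔
      (∀ u v, 0 ≤ A u v) ∧ (∀ u, ∑ v, A u v = μ u) ∧ ∀ v, ∑ u, A u v = ν v := by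
  simp only [IsCoupling, finsum_eq_sum_of_fintype, Set.toFinite, true_and]

theorem IsCoupling.nonneg (hA : IsCoupling μ ν A) (u v : V) : 0 ≤ A u v :=
  (isCoupling_iff_of_fintype.mp hA).1 u v

theorem IsCoupling.row_sum (hA : IsCoupling μ ν A) (u : V) : ∑ v, A u v = μ u :=
  (isCoupling_iff_of_fintype.mp hA).2.1 u

theorem IsCoupling.col_sum (hA : IsCoupling μ ν A) (v : V) : ∑ u, A u v = ν v :=
  (isCoupling_iff_of_fintype.mp hA).2.2 v

theorem IsCoupling.eq_zero_of_right_eq_zero (hA : IsCoupling μ ν A) {v : V} (hv : ν v = 0)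
    (u : V) : A u v = 0 :=
  (sum_eq_zero_iff_of_nonneg fun u _ => hA.nonneg u v).mp ((hA.col_sum v).trans hv) u
    (mem_univ u)

theorem IsCoupling.eq_zero_of_left_eq_zero (hA : IsCoupling μ ν A) {u : V} (hu : μ u = 0)
    (v : V) : A u v = 0 :=
  (sum_eq_zero_iff_of_nonneg fun v _ => hA.nonneg u v).mp ((hA.row_sum u).trans hu) v
    (mem_univ v)

theorem isCoupling_diagonal (hμ : ∀ u, 0 ≤ μ u) :
    IsCoupling μ μ (fun u v => if u = v then μ u else 0) := by
  refine isCoupling_iff_of_fintype.mpr ⟨fun u v => ?_, fun u => ?_, fun v => ?_⟩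
  · split_ifs <;> simp [hμ]
  · simp
  · simp

theorem isCoupling_prod (hμ : ∀ u, 0 ≤ μ u) (hν : ∀ v, 0 ≤ ν v) (hμ₁ : ∑ u, μ u = 1)
    (hν₁ : ∑ v, ν v = 1) : IsCoupling μ ν (fun u v => μ u * ν v) :=
  isCoupling_iff_of_fintype.mpr ⟨fun u v => mul_nonneg (hμ u) (hν v),
    fun u => by rw [← mul_sum, hν₁, mul_one], fun v => by rw [← sum_mul, hμ₁, one_mul]⟩

/-- The law of `(X, Z, Y)` with `(X, Z) ∼ B`, `(Z, Y) ∼ C` and `X ⫫ Y` given `Z`; dividing by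
`ν w = 0` is harmless, since then `B u w = C w v = 0`. -/
def glue (B C : V → V → ℝ) (ν : V → ℝ) (u w v : V) : ℝ := B u w * C w v / ν w

theorem glue_nonneg (hB : IsCoupling μ ν B) (hC : IsCoupling ν ρ C) (u w v : V) :
    0 ≤ glue B C ν u w v :=
  div_nonneg (mul_nonneg (hB.nonneg u w) (hC.nonneg w v))
    ((hB.col_sum w).symm ▸ sum_nonneg fun u _ => hB.nonneg u w)

theorem sum_glue_right (hB : IsCoupling μ ν B) (hC : IsCoupling ν ρ C) (u w : V) :
    ∑ v, glue B C ν u w v = B u w := by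
  simp only [glue, ← sum_div, ← mul_sum, hC.row_sum]
  by_cases hw : ν w = 0
  · simp [hw, hB.eq_zero_of_right_eq_zero hw]
  · exact mul_div_cancel_right₀ _ hw

theorem sum_glue_left (hB : IsCoupling μ ν B) (hC : IsCoupling ν ρ C) (w v : V) :
    ∑ u, glue B C ν u w v = C w v := by
  simp only [glue, ← sum_div, ← sum_mul, hB.col_sum]
  by_cases hw : ν w = 0
  · simp [hw, hC.eq_zero_of_left_eq_zero hw]
  · exact mul_div_cancel_left₀ _ hw

theorem IsCoupling.comp (hB : IsCoupling μ ν B) (hC : IsCoupling ν ρ C) :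
    IsCoupling μ ρ (fun u v => ∑ w, glue B C ν u w v) := by
  refine isCoupling_iff_of_fintype.mpr
    ⟨fun u v => sum_nonneg fun w _ => glue_nonneg hB hC u w v, fun u => ?_, fun v => ?_⟩
  · rw [sum_comm]
    simp only [sum_glue_right hB hC, hB.row_sum]
  · rw [sum_comm]
    simp only [sum_glue_left hB hC, hC.col_sum]

end Coupling

def cost (G : SimpleGraph V) (A : V → V → ℝ) : ℝ := ∑ u, ∑ v, A u v * (G.dist u v : ℝ)

theorem W_eq_sInf_cost (G : SimpleGraph V) (μ ν : V → ℝ) :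
    W G μ ν = sInf (cost G '' {A | IsCoupling μ ν A}) := by
  simp only [W, cost, finsum_eq_sum_of_fintype, Set.image, Set.mem_ofPred_eq, eq_comm]

theorem cost_nonneg (G : SimpleGraph V) {A : V → V → ℝ} (hA : ∀ u v, 0 ≤ A u v) :
    0 ≤ cost G A :=
  sum_nonneg fun u _ => sum_nonneg fun v _ => mul_nonneg (hA u v) (Nat.cast_nonneg _)

theorem W_le_cost (G : SimpleGraph V) {μ ν : V → ℝ} {A : V → V → ℝ}
    (hA : IsCoupling μ ν A) :
    W G μ ν ≤ cost G A := by
  have hbdd : BddBelow (cost G '' {A | IsCoupling μ ν A}) := by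
    refine ⟨0, ?_⟩
    rintro _ ⟨B, hB, rfl⟩
    exact cost_nonneg G hB.nonneg
  exact W_eq_sInf_cost G μ ν ▸ csInf_le hbdd ⟨A, hA, rfl⟩

theorem exists_cost_lt (G : SimpleGraph V) {μ ν : V → ℝ} (h : ∃ A, IsCoupling μ ν A)
    {ε : ℝ} (hε : 0 < ε) : ∃ A, IsCoupling μ ν A ∧ cost G A < W G μ ν + ε := by
  have hlt : sInf (cost G '' {A | IsCoupling μ ν A}) < W G μ ν + ε :=
    W_eq_sInf_cost G μ ν ▸ lt_add_of_pos_right _ hε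
  obtain ⟨_, ⟨A, hA, rfl⟩, hA_lt⟩ :=
    exists_lt_of_csInf_lt (Set.Nonempty.image (cost G) h) hlt
  exact ⟨A, hA, hA_lt⟩

theorem W_self_nonpos (G : SimpleGraph V) {μ : V → ℝ} (hμ : ∀ u, 0 ≤ μ u) : W G μ μ ≤ 0 :=
  (W_le_cost G (isCoupling_diagonal hμ)).trans_eq <|
    sum_eq_zero fun u _ => sum_eq_zero fun v _ => by by_cases h : u = v <;> simp [h]

theorem cost_comp_le {G : SimpleGraph V} (hconn : G.Connected) {μ ν ρ : V → ℝ}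
    {B C : V → V → ℝ} (hB : IsCoupling μ ν B) (hC : IsCoupling ν ρ C) :
    cost G (fun u v => ∑ w, glue B C ν u w v) ≤ cost G B + cost G C := by
  calc cost G (fun u v => ∑ w, glue B C ν u w v)
      ≤ ∑ u, ∑ v, ∑ w, glue B C ν u w v * ((G.dist u w : ℝ) + G.dist w v) := by
        refine sum_le_sum fun u _ => sum_le_sum fun v _ => ?_
        rw [sum_mul]
        refine sum_le_sum fun w _ => mul_le_mul_of_nonneg_left ?_ (glue_nonneg hB hC u w v)
        exact_mod_cast hconn.dist_triangle
    _ = ∑ u, ∑ w, (∑ v, glue B C ν u w v) * G.dist u w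
          + ∑ w, ∑ v, (∑ u, glue B C ν u w v) * G.dist w v := by
        simp only [mul_add, sum_add_distrib, sum_mul]
        congr 1
        · exact sum_congr rfl fun u _ => sum_comm
        · rw [sum_congr rfl fun u _ => sum_comm, sum_comm]
          exact sum_congr rfl fun w _ => sum_comm
    _ = cost G B + cost G C := by
        simp only [sum_glue_right hB hC, sum_glue_left hB hC, cost]

theorem W_triangle {G : SimpleGraph V} (hconn : G.Connected) {μ ν ρ : V → ℝ}
    (hμν : ∃ B, IsCoupling μ ν B) (hνρ : ∃ C, IsCoupling ν ρ C) :
    W G μ ρ ≤ W G μ ν + W G ν ρ := by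
  refine le_of_forall_pos_lt_add fun ε hε => ?_
  obtain ⟨B, hB, hBε⟩ := exists_cost_lt G hμν (half_pos hε)
  obtain ⟨C, hC, hCε⟩ := exists_cost_lt G hνρ (half_pos hε)
  calc W G μ ρ ≤ cost G B + cost G C :=
        (W_le_cost G (hB.comp hC)).trans (cost_comp_le hconn hB hC)
    _ < W G μ ν + W G ν ρ + ε := by linarith

section RandomWalk

variable {G : SimpleGraph V}

theorem sum_rw {x z : V} (hxz : G.Adj x z) : ∑ v, rw G x v = 1 := by
  have : Nonempty (G.neighborSet x) := ⟨⟨z, hxz⟩⟩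
  have hdeg : (deg G x : ℝ) ≠ 0 := Nat.cast_ne_zero.mpr Nat.card_pos.ne'
  have hcard : #(univ.filter (G.Adj x)) = deg G x := by
    rw [← SimpleGraph.neighborFinset_eq_filter, deg, Nat.card_eq_fintype_card,
      SimpleGraph.neighborFinset_def, Set.toFinset_card]
  simp only [rw, sum_ite, sum_const, nsmul_eq_mul, mul_zero, add_zero, hcard,
    mul_inv_cancel₀ hdeg]

theorem isCoupling_rw_rw {x x' y y' : V} (hx : G.Adj x x') (hy : G.Adj y y') :
    IsCoupling (rw G x) (rw G y) (fun u v => rw G x u * rw G y v) :=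
  isCoupling_prod (rw_nonneg x) (rw_nonneg y) (sum_rw hx) (sum_rw hy)

theorem W_rw_le_mul_length (hconn : G.Connected) (hdeg : ∀ v, ∃ w, G.Adj v w) {k : ℝ}
    (hedge : ∀ u v, G.Adj u v → W G (rw G u) (rw G v) ≤ 1 - k) :
    ∀ {x y : V} (p : G.Walk x y), W G (rw G x) (rw G y) ≤ (1 - k) * p.length
  | _, _, .nil => by simpa using W_self_nonpos G (rw_nonneg _)
  | x, y, .cons (v := z) hxz q => by
    obtain ⟨y', hy⟩ := hdeg y
    calc W G (rw G x) (rw G y) ≤ W G (rw G x) (rw G z) + W G (rw G z) (rw G y) :=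
          W_triangle hconn ⟨_, isCoupling_rw_rw hxz hxz.symm⟩
            ⟨_, isCoupling_rw_rw hxz.symm hy⟩
      _ ≤ (1 - k) + (1 - k) * q.length :=
          add_le_add (hedge x z hxz) (W_rw_le_mul_length hconn hdeg hedge q)
      _ = (1 - k) * (q.cons hxz).length := by push_cast [SimpleGraph.Walk.length_cons]; ring

end RandomWalk

end OR

theorem ricci_lower_bound_of_edges {V : Type*} [Fintype V] (G : SimpleGraph V)
    (hconn : G.Connected) (k : ℝ) (h : ∀ u v : V, G.Adj u v → k ≤ OR.ricci G u v) :
    ∀ x y : V, x ≠ y → k ≤ OR.ricci G x y := by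
  intro x y hxy
  have : Nontrivial V := ⟨⟨x, y, hxy⟩⟩
  have hedge (u v : V) (huv : G.Adj u v) : OR.W G (OR.rw G u) (OR.rw G v) ≤ 1 - k := by
    have hd : G.dist u v = 1 := SimpleGraph.dist_eq_one_iff_adj.mpr huv
    simpa [hd] using (OR.le_ricci_iff (hd ▸ one_pos) k).mp (h u v huv)
  obtain ⟨p, hp⟩ := hconn.exists_walk_length_eq_dist x y
  rw [OR.le_ricci_iff (hconn.pos_dist_of_ne hxy), ← hp]
  exact OR.W_rw_le_mul_length hconn hconn.preconnected.exists_adj_of_nontrivial hedge p
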